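/- Let s_1,…,s_l be positive integers, w = s_1+⋯+s_l, and I = {s_1, s_1+s_2, …, s_1+⋯+s_{l-1}}. Then for any positive integer n, ∑_{k=1}^n [n choose k]_q (-1)^k q^{binom(k,2)+k} ∑_{1≤k_1<k_2<⋯<k_l=k} ∏_{i=1}^l q^{(s_i-1)k_i}/[k_i]_q^{s_i} = (-1)^l ∑ ∏_{i=1}^w q^{j_i}/[j_i]_q, where the last sum is over tuples 1≤j_1≤j_2≤⋯≤j_w≤n subject to the strict inequalities j_i < j_{i+1} for each i ∈ I. -/

import Mathlib

/-!
Write `L_n` for the left-hand side and `R_n` for the sum on the right. Both satisfy the same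
recursion in `n`. On the right, the tuples with `j_w = n + 1` contribute `q^(n+1)/[n+1]` times the
sum for the composition whose last part is lowered by one (or dropped, when it is `1`, the
remaining entries then being `≤ n`). On the left, the absorption identity
`[n+1,k](1 - q^(n+1-k)) = [n,k](1 - q^(n+1))` gives
`L_{n+1} - L_n = q^(n+1)/[n+1] · ∑_k [n+1,k] (-1)^k q^C(k,2) [k]_q g(k)`, where `g(k)` is the
inner sum. Multiplying by `[k]_q` lowers the last exponent `s_l`; when `s_l = 1` it turns `g(k)`
into a sum over the shorter composition with `k_{l-1} < k`, and exchanging the summations with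
`∑_{k>m} (-1)^k q^C(k,2) [n+1,k] = (-1)^(m+1) q^C(m+1,2) [n,m]` produces `-L_n` of the shorter
composition. Induction on `n` and on the last exponent then matches the two sides.
-/

open scoped Classical

noncomputable def qbinom (q : ℂ) (n k : ℕ) : ℂ :=
  ∏ i ∈ Finset.range k, (1 - q ^ (n - k + 1 + i)) / (1 - q ^ (1 + i))

noncomputable def qint (q : ℂ) (k : ℕ) : ℂ := (1 - q ^ k) / (1 - q)

open Finset

variable {q : ℂ} {n k m : ℕ}

noncomputable def qFalling (q : ℂ) (n k : ℕ) : ℂ := ∏ i ∈ range k, (1 - q ^ (n - i))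

lemma qFalling_succ_succ : qFalling q (n + 1) (k + 1) = (1 - q ^ (n + 1)) * qFalling q n k := by
  simp only [qFalling, prod_range_succ', Nat.sub_zero, Nat.add_sub_add_right, mul_comm]

lemma qFalling_succ_right : qFalling q n (k + 1) = qFalling q n k * (1 - q ^ (n - k)) :=
  prod_range_succ _ _

lemma qbinom_eq_qFalling_div (hk : k ≤ n) : qbinom q n k = qFalling q n k / qFalling q k k := by
  rw [qbinom, prod_div_distrib, qFalling, qFalling, ← prod_range_reflect _ k,
    ← prod_range_reflect (fun i => 1 - q ^ (k - i)) k]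
  congr 1 <;> refine prod_congr rfl fun i hi => ?_ <;> rw [mem_range] at hi <;> congr 2 <;> omega

lemma qbinom_zero_right : qbinom q n 0 = 1 := by simp [qbinom]

lemma qbinom_self (hq : ∀ i, 1 ≤ i → i ≤ n → q ^ i ≠ 1) : qbinom q n n = 1 := by
  refine prod_eq_one fun i hi => ?_
  rw [mem_range] at hi
  rw [Nat.sub_self, zero_add]
  exact div_self (sub_ne_zero.mpr (hq _ (by omega) (by omega)).symm)

lemma qbinom_succ_mul_one_sub (hk : k ≤ n) :
    qbinom q (n + 1) k * (1 - q ^ (n + 1 - k)) = qbinom q n k * (1 - q ^ (n + 1)) := by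
  rw [qbinom_eq_qFalling_div (by omega), qbinom_eq_qFalling_div hk, div_mul_eq_mul_div,
    div_mul_eq_mul_div, ← qFalling_succ_right, qFalling_succ_succ, mul_comm]

lemma qbinom_succ_succ (hk : k < n) (hq : q ^ (k + 1) ≠ 1) :
    qbinom q (n + 1) (k + 1) = qbinom q n k + q ^ (k + 1) * qbinom q n (k + 1) := by
  rw [qbinom_eq_qFalling_div (by omega), qbinom_eq_qFalling_div hk.le,
    qbinom_eq_qFalling_div hk, qFalling_succ_succ, qFalling_succ_succ, qFalling_succ_right,
    mul_div_mul_comm, mul_comm (qFalling q n k), mul_div_mul_comm]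
  have hq' : 1 - q ^ (k + 1) ≠ 0 := sub_ne_zero.mpr hq.symm
  have hpow : q ^ (n + 1) = q ^ (k + 1) * q ^ (n - k) := by rw [← pow_add]; congr 1; omega
  field_simp
  rw [hpow]
  ring

lemma sum_range_alternating_qbinom (hq : ∀ i, 1 ≤ i → i ≤ n → q ^ i ≠ 1) (hm : m ≤ n) :
    ∑ k ∈ range (m + 1), qbinom q (n + 1) k * (-1) ^ k * q ^ k.choose 2
      = qbinom q n m * (-1) ^ m * q ^ (m + 1).choose 2 := by
  induction m with
  | zero => simp [qbinom_zero_right]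
  | succ m ih =>
    rw [sum_range_succ, ih (by omega), qbinom_succ_succ (by omega) (hq _ (by omega) hm),
      Nat.choose_succ_succ' (m + 1), Nat.choose_one_right, pow_add]
    ring

lemma sum_Icc_alternating_qbinom (hq : ∀ i, 1 ≤ i → i ≤ n + 1 → q ^ i ≠ 1) (hm : m ≤ n) :
    ∑ k ∈ Icc (m + 1) (n + 1), qbinom q (n + 1) k * (-1) ^ k * q ^ k.choose 2
      = qbinom q n m * (-1) ^ (m + 1) * q ^ (m + 1).choose 2 := by
  have hq' : ∀ i, 1 ≤ i → i ≤ n → q ^ i ≠ 1 := fun i h1 h2 => hq i h1 (by omega)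
  have htotal :
      ∑ k ∈ range (n + 1 + 1), qbinom q (n + 1) k * (-1) ^ k * q ^ k.choose 2 = 0 := by
    rw [sum_range_succ, sum_range_alternating_qbinom hq' le_rfl, qbinom_self hq, qbinom_self hq']
    ring
  rw [← sum_range_add_sum_Ico _ (by omega : m + 1 ≤ n + 1 + 1),
    sum_range_alternating_qbinom hq' hm, Ico_add_one_right_eq_Icc] at htotal
  linear_combination htotal

lemma sum_alternating_qbinom (hq : ∀ i, 1 ≤ i → i ≤ n + 1 → q ^ i ≠ 1) :
    ∑ k ∈ Icc 1 (n + 1), qbinom q (n + 1) k * (-1) ^ k * q ^ k.choose 2 = -1 := by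
  simpa [qbinom_zero_right] using sum_Icc_alternating_qbinom hq (Nat.zero_le n)

lemma qint_ne_zero (hq : ∀ i, 1 ≤ i → i ≤ n → q ^ i ≠ 1) (hk : 1 ≤ k) (hkn : k ≤ n) :
    qint q k ≠ 0 :=
  div_ne_zero (sub_ne_zero.mpr (hq k hk hkn).symm)
    (sub_ne_zero.mpr (by simpa using (hq 1 le_rfl (by omega)).symm))

lemma qbinom_succ_mul_pow (hq : ∀ i, 1 ≤ i → i ≤ n + 1 → q ^ i ≠ 1) (hk : k ≤ n) :
    qbinom q (n + 1) k * q ^ k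
      = qbinom q n k * q ^ k + q ^ (n + 1) / qint q (n + 1) * qint q k * qbinom q (n + 1) k := by
  have h1 : 1 - q ≠ 0 := sub_ne_zero.mpr (by simpa using (hq 1 le_rfl (by omega)).symm)
  have hD : 1 - q ^ (n + 1) ≠ 0 := sub_ne_zero.mpr (hq _ (by omega) le_rfl).symm
  have hpow : q ^ (n + 1) = q ^ (n + 1 - k) * q ^ k := by rw [← pow_add]; congr 1; omega
  rw [eq_div_of_mul_eq hD (qbinom_succ_mul_one_sub hk).symm, qint, qint]
  rw [hpow] at hD ⊢
  generalize q ^ (n + 1 - k) = a at *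
  generalize q ^ k = b at *
  have hD' : 1 - b * a ≠ 0 := by rwa [mul_comm]
  field_simp
  ring

noncomputable def qBinomTransform (q : ℂ) (n : ℕ) (G : ℕ → ℂ) : ℂ :=
  ∑ k ∈ Icc 1 n, qbinom q n k * (-1) ^ k * q ^ (k.choose 2 + k) * G k

lemma qBinomTransform_zero (G : ℕ → ℂ) : qBinomTransform q 0 G = 0 := by
  simp [qBinomTransform]

lemma qBinomTransform_succ (hq : ∀ i, 1 ≤ i → i ≤ n + 1 → q ^ i ≠ 1) (G : ℕ → ℂ) :
    qBinomTransform q (n + 1) G = qBinomTransform q n G + q ^ (n + 1) / qint q (n + 1) *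
      ∑ k ∈ Icc 1 (n + 1), qbinom q (n + 1) k * (-1) ^ k * q ^ k.choose 2 * (qint q k * G k) := by
  have hterm : ∀ k ∈ Icc 1 n, qbinom q (n + 1) k * (-1) ^ k * q ^ (k.choose 2 + k) * G k
      = qbinom q n k * (-1) ^ k * q ^ (k.choose 2 + k) * G k + q ^ (n + 1) / qint q (n + 1) *
        (qbinom q (n + 1) k * (-1) ^ k * q ^ k.choose 2 * (qint q k * G k)) := by
    intro k hk
    rw [pow_add]
    linear_combination (-1) ^ k * q ^ k.choose 2 * G k * qbinom_succ_mul_pow hq (mem_Icc.mp hk).2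
  have hn1 : qint q (n + 1) ≠ 0 := qint_ne_zero hq (by omega) le_rfl
  have htop :
      qbinom q (n + 1) (n + 1) * (-1) ^ (n + 1) * q ^ ((n + 1).choose 2 + (n + 1)) * G (n + 1)
        = q ^ (n + 1) / qint q (n + 1) * (qbinom q (n + 1) (n + 1) * (-1) ^ (n + 1) *
          q ^ (n + 1).choose 2 * (qint q (n + 1) * G (n + 1))) := by
    field_simp
    ring
  rw [qBinomTransform, qBinomTransform, sum_Icc_succ_top (by omega), sum_congr rfl hterm,
    sum_add_distrib, mul_sum, sum_Icc_succ_top (by omega : 1 ≤ n + 1), htop, add_assoc]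

lemma sum_alternating_qbinom_mul_sum_Icc (hq : ∀ i, 1 ≤ i → i ≤ n + 1 → q ^ i ≠ 1)
    (H : ℕ → ℂ) :
    ∑ k ∈ Icc 1 (n + 1),
        qbinom q (n + 1) k * (-1) ^ k * q ^ k.choose 2 * ∑ m ∈ Icc 1 (k - 1), H m
      = -qBinomTransform q n H := by
  simp_rw [mul_sum]
  rw [sum_comm' (t' := Icc 1 n) (s' := fun m => Icc (m + 1) (n + 1))
    (fun k m => by simp only [mem_Icc]; omega), qBinomTransform, ← sum_neg_distrib]
  refine sum_congr rfl fun m hm => ?_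
  rw [← sum_mul, sum_Icc_alternating_qbinom hq (mem_Icc.mp hm).2, Nat.choose_succ_succ',
    Nat.choose_one_right, pow_add, pow_add]
  ring

lemma sum_piFinset_snoc {α β : Type*} [AddCommMonoid β] {w : ℕ} (S : Finset α)
    (G : (Fin (w + 1) → α) → β) :
    ∑ f ∈ Fintype.piFinset (fun _ => S), G f
      = ∑ x ∈ S, ∑ g ∈ Fintype.piFinset (fun _ => S), G (Fin.snoc g x) := by
  have h := filter_piFinset_eq_map_snocEquiv (fun _ : Fin (w + 1) => S) fun _ => True
  simp only [filter_true] at h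
  rw [h, sum_map, sum_product]
  rfl

lemma prod_snoc_apply {M : Type*} [CommMonoid M] {w : ℕ} (F : ℕ → ℕ → M) (g : Fin w → ℕ)
    (x : ℕ) :
    ∏ i : Fin (w + 1), F i ((Fin.snoc g x : Fin (w + 1) → ℕ) i)
      = (∏ i : Fin w, F i (g i)) * F w x := by
  simp [Fin.prod_univ_castSucc]

def IsMarkedChain (P : ℕ → Prop) {w : ℕ} (j : Fin w → ℕ) : Prop :=
  ∀ (m : ℕ) (hm : m + 1 < w), j ⟨m, Nat.lt_of_succ_lt hm⟩ ≤ j ⟨m + 1, hm⟩ ∧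
    (P (m + 1) → j ⟨m, Nat.lt_of_succ_lt hm⟩ < j ⟨m + 1, hm⟩)

section IsMarkedChain

variable {P : ℕ → Prop} {w : ℕ}

lemma isMarkedChain_iff_succ (j : Fin (w + 1) → ℕ) :
    IsMarkedChain P j ↔
      ∀ i : Fin w, j i.castSucc ≤ j i.succ ∧ (P (i + 1) → j i.castSucc < j i.succ) :=
  ⟨fun h i => h i (by omega), fun h m hm => h ⟨m, by omega⟩⟩

lemma IsMarkedChain.monotone {j : Fin w → ℕ} (h : IsMarkedChain P j) : Monotone j := by
  cases w with
  | zero => exact fun a => a.elim0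
  | succ w => exact Fin.monotone_iff_le_succ.mpr fun i => ((isMarkedChain_iff_succ j).mp h i).1

lemma isMarkedChain_true_iff (j : Fin w → ℕ) :
    IsMarkedChain (fun _ => True) j ↔ StrictMono j := by
  cases w with
  | zero => exact ⟨fun _ a => a.elim0, fun _ m hm => absurd hm (by omega)⟩
  | succ w =>
    simp only [isMarkedChain_iff_succ, Fin.strictMono_iff_lt_succ, true_implies]
    exact forall_congr' fun i => and_iff_right_of_imp le_of_lt

lemma isMarkedChain_snoc_iff (g : Fin w → ℕ) (x : ℕ) :
    IsMarkedChain P (Fin.snoc g x : Fin (w + 1) → ℕ) ↔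
      IsMarkedChain P g ∧ ∀ i, g i ≤ x ∧ (P w → g i < x) := by
  cases w with
  | zero => exact ⟨fun _ => ⟨fun m hm => absurd hm (by omega), fun i => i.elim0⟩,
      fun _ m hm => absurd hm (by omega)⟩
  | succ w =>
    rw [isMarkedChain_iff_succ, isMarkedChain_iff_succ, Fin.forall_fin_succ']
    simp only [Fin.snoc_castSucc, Fin.succ_castSucc, Fin.succ_last, Fin.snoc_last,
      Fin.val_castSucc, Fin.val_last]
    refine and_congr_right fun hg => ⟨fun ⟨hle, hlt⟩ i => ?_, fun h => h (Fin.last w)⟩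
    have hi := ((isMarkedChain_iff_succ g).mpr hg).monotone (Fin.le_last i)
    exact ⟨hi.trans hle, fun hp => hi.trans_lt (hlt hp)⟩

lemma isMarkedChain_congr {Q : ℕ → Prop} (h : ∀ p < w, P p ↔ Q p) (j : Fin w → ℕ) :
    IsMarkedChain P j ↔ IsMarkedChain Q j :=
  forall₂_congr fun _ hm => and_congr_right' (imp_congr_left (h _ hm))

end IsMarkedChain

noncomputable def markedChains (P : ℕ → Prop) (w M : ℕ) : Finset (Fin w → ℕ) :=
  (Fintype.piFinset fun _ : Fin w => Icc 1 M).filter (IsMarkedChain P)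

noncomputable def markedChainSum (P : ℕ → Prop) (F : ℕ → ℕ → ℂ) (w M : ℕ) : ℂ :=
  ∑ j ∈ markedChains P w M, ∏ i : Fin w, F i (j i)

section MarkedChains

variable {P : ℕ → Prop} {w M : ℕ}

lemma sum_markedChains_succ {β : Type*} [AddCommMonoid β] (G : (Fin (w + 1) → ℕ) → β) :
    ∑ j ∈ markedChains P (w + 1) M, G j
      = ∑ x ∈ Icc 1 M, ∑ g ∈ markedChains P w (if P w then x - 1 else x), G (Fin.snoc g x) := by
  rw [markedChains, sum_filter, sum_piFinset_snoc]
  refine sum_congr rfl fun x hx => ?_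
  rw [mem_Icc] at hx
  have hbound : ∀ a : ℕ, ((1 ≤ a ∧ a ≤ M) ∧ a ≤ x ∧ (P w → a < x))
      ↔ 1 ≤ a ∧ a ≤ (if P w then x - 1 else x) := by
    intro a
    split_ifs with hP <;> simp only [hP, true_implies, false_implies, and_true] <;> omega
  rw [← sum_filter, markedChains]
  congr 1
  ext g
  simp only [mem_filter, Fintype.mem_piFinset, mem_Icc, isMarkedChain_snoc_iff, ← hbound,
    forall_and]
  tauto

lemma markedChainSum_zero_left (P : ℕ → Prop) (F : ℕ → ℕ → ℂ) (M : ℕ) :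
    markedChainSum P F 0 M = 1 := by
  rw [markedChainSum, markedChains, filter_true_of_mem fun _ _ _ hm => absurd hm (by omega)]
  simp

lemma markedChainSum_succ (F : ℕ → ℕ → ℂ) :
    markedChainSum P F (w + 1) M
      = ∑ x ∈ Icc 1 M, markedChainSum P F w (if P w then x - 1 else x) * F w x := by
  simp only [markedChainSum, sum_markedChains_succ, prod_snoc_apply, sum_mul]

lemma markedChainSum_zero_right (P : ℕ → Prop) (F : ℕ → ℕ → ℂ) (w : ℕ) :
    markedChainSum P F (w + 1) 0 = 0 := by
  simp [markedChainSum_succ]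

lemma markedChainSum_succ_right (F : ℕ → ℕ → ℂ) :
    markedChainSum P F (w + 1) (M + 1) = markedChainSum P F (w + 1) M
      + markedChainSum P F w (if P w then M else M + 1) * F w (M + 1) := by
  rw [markedChainSum_succ, markedChainSum_succ, sum_Icc_succ_top (by omega), Nat.add_sub_cancel]

lemma markedChainSum_congr {Q : ℕ → Prop} (h : ∀ p < w, P p ↔ Q p) (F : ℕ → ℕ → ℂ) (M : ℕ) :
    markedChainSum P F w M = markedChainSum Q F w M := by
  rw [markedChainSum, markedChainSum, markedChains, markedChains,
    filter_congr fun j _ => isMarkedChain_congr h j]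

end MarkedChains

lemma sum_strictMono_last_eq {l : ℕ} (hk : 1 ≤ k) (hkn : k ≤ n) (F : ℕ → ℕ → ℂ) :
    ∑ f ∈ (Fintype.piFinset fun _ : Fin (l + 1) => Icc 1 n).filter
        (fun f => StrictMono f ∧ f (Fin.last l) = k), ∏ i : Fin (l + 1), F i (f i)
      = markedChainSum (fun _ => True) F l (k - 1) * F l k := by
  rw [← filter_filter, filter_congr fun f _ => (isMarkedChain_true_iff f).symm, sum_filter]
  change ∑ f ∈ markedChains (fun _ => True) (l + 1) n, _ = _
  simp only [sum_markedChains_succ, Fin.snoc_last, if_true, prod_snoc_apply, sum_ite_irrel,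
    sum_const_zero, sum_ite_eq', mem_Icc, hk, hkn, and_self, markedChainSum, sum_mul]

noncomputable def harmWeight (q : ℂ) (e k : ℕ) : ℂ := q ^ ((e - 1) * k) / qint q k ^ e

lemma qint_mul_harmWeight_one (hk : qint q k ≠ 0) : qint q k * harmWeight q 1 k = 1 := by
  simp [harmWeight, hk]

lemma qint_mul_harmWeight_add_two (hk : qint q k ≠ 0) (e : ℕ) :
    qint q k * harmWeight q (e + 2) k = q ^ k * harmWeight q (e + 1) k := by
  rw [harmWeight, harmWeight, Nat.add_sub_cancel, show e + 2 - 1 = e + 1 by omega, add_one_mul,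
    pow_add, pow_succ _ (e + 1)]
  field_simp

def partialSums (s : ℕ → ℕ) (l : ℕ) : Finset ℕ :=
  (range l).image fun t => ∑ i ∈ range (t + 1), s i

lemma le_of_mem_partialSums {s : ℕ → ℕ} {l p : ℕ} (hp : p ∈ partialSums s l) :
    p ≤ ∑ i ∈ range l, s i := by
  obtain ⟨t, ht, rfl⟩ := mem_image.mp hp
  exact sum_le_sum_of_subset (range_subset_range.mpr (mem_range.mp ht))

lemma partialSums_succ (s : ℕ → ℕ) (l : ℕ) :
    partialSums s (l + 1) = insert (∑ i ∈ range (l + 1), s i) (partialSums s l) := by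
  simp only [partialSums, range_add_one, image_insert]

/-- The inner sum of the left-hand side for the composition `(s 0, …, s (l - 1), e)`, over the
tuples ending at `k`. -/
noncomputable def topSum (q : ℂ) (s : ℕ → ℕ) (l e k : ℕ) : ℂ :=
  markedChainSum (fun _ => True) (fun i => harmWeight q (s i)) l (k - 1) * harmWeight q e k

/-- The sum on the right-hand side for the composition `(s 0, …, s (l - 1), e)`. -/
noncomputable def blockSum (q : ℂ) (s : ℕ → ℕ) (l e n : ℕ) : ℂ :=
  markedChainSum (· ∈ partialSums s l) (fun _ k => q ^ k / qint q k) (∑ i ∈ range l, s i + e) n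

section Composition

variable {s : ℕ → ℕ} {l : ℕ}

lemma blockSum_zero_right (e : ℕ) : blockSum q s l (e + 1) 0 = 0 :=
  markedChainSum_zero_right _ _ _

lemma blockSum_succ_right {e : ℕ} (he : 1 ≤ e) :
    blockSum q s l (e + 1) (n + 1)
      = blockSum q s l (e + 1) n + blockSum q s l e (n + 1) * (q ^ (n + 1) / qint q (n + 1)) := by
  have hnot : ∑ i ∈ range l, s i + e ∉ partialSums s l := fun h => by
    have := le_of_mem_partialSums h
    omega
  rw [blockSum, blockSum, ← add_assoc, markedChainSum_succ_right, if_neg hnot, blockSum]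

lemma blockSum_zero_one_succ :
    blockSum q s 0 1 (n + 1) = blockSum q s 0 1 n + q ^ (n + 1) / qint q (n + 1) := by
  rw [blockSum, blockSum, sum_range_zero, zero_add, markedChainSum_succ_right,
    markedChainSum_zero_left, one_mul]

lemma blockSum_succ_one_succ :
    blockSum q s (l + 1) 1 (n + 1)
      = blockSum q s (l + 1) 1 n + blockSum q s l (s l) n * (q ^ (n + 1) / qint q (n + 1)) := by
  have hmem : ∑ i ∈ range (l + 1), s i ∈ partialSums s (l + 1) := by
    rw [partialSums_succ]
    exact mem_insert_self _ _
  have hagree : ∀ p < ∑ i ∈ range (l + 1), s i, p ∈ partialSums s (l + 1) ↔ p ∈ partialSums s l :=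
    fun p hp => by rw [partialSums_succ, mem_insert, or_iff_right hp.ne]
  rw [blockSum, blockSum, markedChainSum_succ_right, if_pos hmem, markedChainSum_congr hagree,
    blockSum, ← sum_range_succ]

lemma qint_mul_topSum_add_two (hk : qint q k ≠ 0) (e : ℕ) :
    qint q k * topSum q s l (e + 2) k = q ^ k * topSum q s l (e + 1) k := by
  rw [topSum, topSum, mul_left_comm, qint_mul_harmWeight_add_two hk, mul_left_comm]

lemma qint_mul_topSum_one (hk : qint q k ≠ 0) :
    qint q k * topSum q s l 1 k
      = markedChainSum (fun _ => True) (fun i => harmWeight q (s i)) l (k - 1) := by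
  rw [topSum, mul_left_comm, qint_mul_harmWeight_one hk, mul_one]

lemma markedChainSum_harmWeight_succ (M : ℕ) :
    markedChainSum (fun _ => True) (fun i => harmWeight q (s i)) (l + 1) M
      = ∑ m ∈ Icc 1 M, topSum q s l (s l) m := by
  simp only [markedChainSum_succ, if_true]
  rfl

lemma sum_qint_mul_topSum_add_two (hq : ∀ i, 1 ≤ i → i ≤ n + 1 → q ^ i ≠ 1) (e : ℕ) :
    ∑ k ∈ Icc 1 (n + 1),
        qbinom q (n + 1) k * (-1) ^ k * q ^ k.choose 2 * (qint q k * topSum q s l (e + 2) k)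
      = qBinomTransform q (n + 1) (topSum q s l (e + 1)) := by
  refine sum_congr rfl fun k hk => ?_
  rw [mem_Icc] at hk
  rw [qint_mul_topSum_add_two (qint_ne_zero hq hk.1 hk.2), pow_add]
  ring

lemma sum_qint_mul_topSum_zero_one (hq : ∀ i, 1 ≤ i → i ≤ n + 1 → q ^ i ≠ 1) :
    ∑ k ∈ Icc 1 (n + 1),
        qbinom q (n + 1) k * (-1) ^ k * q ^ k.choose 2 * (qint q k * topSum q s 0 1 k) = -1 := by
  refine Eq.trans (sum_congr rfl fun k hk => ?_) (sum_alternating_qbinom hq)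
  rw [mem_Icc] at hk
  rw [qint_mul_topSum_one (qint_ne_zero hq hk.1 hk.2), markedChainSum_zero_left, mul_one]

lemma sum_qint_mul_topSum_succ_one (hq : ∀ i, 1 ≤ i → i ≤ n + 1 → q ^ i ≠ 1) :
    ∑ k ∈ Icc 1 (n + 1),
        qbinom q (n + 1) k * (-1) ^ k * q ^ k.choose 2 * (qint q k * topSum q s (l + 1) 1 k)
      = -qBinomTransform q n (topSum q s l (s l)) := by
  rw [← sum_alternating_qbinom_mul_sum_Icc hq]
  refine sum_congr rfl fun k hk => ?_
  rw [mem_Icc] at hk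
  rw [qint_mul_topSum_one (qint_ne_zero hq hk.1 hk.2), markedChainSum_harmWeight_succ]

theorem qBinomTransform_topSum (hs : ∀ i < l, 1 ≤ s i) {e : ℕ} (he : 1 ≤ e)
    (hq : ∀ i, 1 ≤ i → i ≤ n → q ^ i ≠ 1) :
    qBinomTransform q n (topSum q s l e) = (-1) ^ (l + 1) * blockSum q s l e n := by
  induction n generalizing l e with
  | zero =>
    obtain ⟨e, rfl⟩ := Nat.exists_eq_add_of_le' he
    rw [qBinomTransform_zero, blockSum_zero_right, mul_zero]
  | succ n ih =>
    have hq' : ∀ i, 1 ≤ i → i ≤ n → q ^ i ≠ 1 := fun i h1 h2 => hq i h1 (by omega)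
    induction e, he using Nat.le_induction with
    | base =>
      rw [qBinomTransform_succ hq, ih hs le_rfl hq']
      cases l with
      | zero =>
        rw [sum_qint_mul_topSum_zero_one hq, blockSum_zero_one_succ]
        ring
      | succ l =>
        rw [sum_qint_mul_topSum_succ_one hq,
          ih (fun i hi => hs i (by omega)) (hs l (by omega)) hq', blockSum_succ_one_succ]
        ring
    | succ e he ihe =>
      obtain ⟨e, rfl⟩ := Nat.exists_eq_add_of_le' he
      rw [qBinomTransform_succ hq, ih hs (by omega) hq', sum_qint_mul_topSum_add_two hq, ihe,
        blockSum_succ_right he]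
      ring

end Composition

theorem stmt_7 (l : ℕ) (hl : 1 ≤ l) (s : ℕ → ℕ) (hs : ∀ i < l, 1 ≤ s i)
    (w : ℕ) (hw : w = ∑ i ∈ Finset.range l, s i)
    (I : Finset ℕ)
    (hI : I = (Finset.range (l - 1)).image fun t => ∑ i ∈ Finset.range (t + 1), s i)
    (n : ℕ) (q : ℂ)
    (hq : ∀ i, 1 ≤ i → i ≤ n → q ^ i ≠ 1) :
    ∑ k ∈ Finset.Icc 1 n,
        qbinom q n k * (-1) ^ k * q ^ (Nat.choose k 2 + k) *
          ∑ f ∈ (Fintype.piFinset fun _ : Fin l => Finset.Icc 1 n).filter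
            (fun f => StrictMono f ∧ f ⟨l - 1, by omega⟩ = k),
            ∏ i : Fin l, q ^ ((s i.val - 1) * f i) / (qint q (f i)) ^ (s i.val)
      = (-1) ^ l *
          ∑ j ∈ (Fintype.piFinset fun _ : Fin w => Finset.Icc 1 n).filter
            (fun j => ∀ (m : ℕ) (hm : m + 1 < w),
              j ⟨m, Nat.lt_of_succ_lt hm⟩ ≤ j ⟨m + 1, hm⟩ ∧
                ((m + 1) ∈ I → j ⟨m, Nat.lt_of_succ_lt hm⟩ < j ⟨m + 1, hm⟩)),
            ∏ i : Fin w, q ^ (j i) / qint q (j i) := by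
  obtain ⟨l, rfl⟩ : ∃ l', l = l' + 1 := ⟨l - 1, by omega⟩
  subst hw hI
  calc _ = qBinomTransform q n (topSum q s l (s l)) := sum_congr rfl fun k hk => by
          rw [mem_Icc] at hk
          exact congrArg _ (sum_strictMono_last_eq hk.1 hk.2 fun i => harmWeight q (s i))
    _ = (-1) ^ (l + 1) * blockSum q s l (s l) n :=
          qBinomTransform_topSum (fun i hi => hs i (by omega)) (hs l (by omega)) hq
    _ = _ := by
          rw [blockSum, ← sum_range_succ]
          rfl
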